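/- For S in U_r and S' in U_r, the set D̄(S,S') of all a > 0 such that the upper density of Δ_a(S,S') is at most a is a half line unbounded to the right, and the function d̄(S,S') = min(r/2, inf D̄(S,S')) is a translation-invariant pseudometric on U_r. -/

import Mathlib

open Metric Set Pointwise Filter MeasureTheory ENNReal

variable {n : ℕ}

/-- `S` is uniformly discrete with parameter `r`. -/
def UniformlyDiscreteSet (r : ℝ) (S : Set (EuclideanSpace ℝ (Fin n))) : Prop :=
  ∀ x ∈ S, ∀ y ∈ S, x ≠ y → r ≤ dist x y

/-- The translation `S - t`. -/
def translateSet (t : EuclideanSpace ℝ (Fin n))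
    (S : Set (EuclideanSpace ℝ (Fin n))) : Set (EuclideanSpace ℝ (Fin n)) :=
  (fun x => x - t) '' S

/-- The upper density `dens⁺(A) = limsup_{R→∞} card(A ∩ B_R)/|B_R|`. -/
noncomputable def densSup (A : Set (EuclideanSpace ℝ (Fin n))) : ℝ≥0∞ :=
  limsup (fun R : ℝ =>
    ((A ∩ closedBall (0 : EuclideanSpace ℝ (Fin n)) R).ncard : ℝ≥0∞) /
      volume (closedBall (0 : EuclideanSpace ℝ (Fin n)) R)) atTop

/-- `Δ̃_a(S,S') = {x ∈ S : (x + B_a) ∩ S' = ∅}`. -/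
def deltaTilde (a : ℝ) (S S' : Set (EuclideanSpace ℝ (Fin n))) :
    Set (EuclideanSpace ℝ (Fin n)) :=
  {x ∈ S | ({x} + closedBall (0 : EuclideanSpace ℝ (Fin n)) a) ∩ S' = ∅}

/-- `Δ_a(S,S') = Δ̃_a(S,S') ∪ Δ̃_a(S',S)`. -/
def delta (a : ℝ) (S S' : Set (EuclideanSpace ℝ (Fin n))) :
    Set (EuclideanSpace ℝ (Fin n)) :=
  deltaTilde a S S' ∪ deltaTilde a S' S

/-- `D̄(S,S') = {a > 0 : dens⁺(Δ_a(S,S')) ≤ a}`. -/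
def DbarSet (S S' : Set (EuclideanSpace ℝ (Fin n))) : Set ℝ :=
  {a : ℝ | 0 < a ∧ densSup (delta a S S') ≤ ENNReal.ofReal a}

/-- `d̄(S,S') = min (r/2, inf D̄(S,S'))`. -/
noncomputable def dbar (r : ℝ) (S S' : Set (EuclideanSpace ℝ (Fin n))) : ℝ :=
  sInf (insert (r / 2) (DbarSet S S'))

/-!
The upper density is subadditive, and it does not increase under an injection moving points by
a bounded distance, since `|B_{R+c}| / |B_R| → 1`; for locally finite sets, such as subsets of
uniformly discrete ones, this gives monotonicity and translation invariance. For the triangle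
inequality take `a, b < r / 2`: a point `x ∈ S` of `Δ_{a+b}(S,S'')` outside `Δ_a(S,S')` has a
point `y ∈ S'` within `a`, and `y ∈ Δ_b(S',S'')`. Sending `x` to `y` (symmetrically for points
of `S''`) is injective by uniform discreteness, so `dens⁺ Δ_{a+b}(S,S'') ≤ a + b`. Capping `d̄`
at `r / 2` means only such `a, b` matter.
-/

open Topology

local notation "E" => EuclideanSpace ℝ (Fin n)

/-- `Set.ncard` is `0` on infinite sets, so the counting arguments below need this hypothesis. -/
def LocallyFiniteSet (A : Set E) : Prop :=
  ∀ R : ℝ, (A ∩ closedBall 0 R).Finite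

section Finiteness

variable {A B : Set (EuclideanSpace ℝ (Fin n))}

lemma LocallyFiniteSet.subset (hB : LocallyFiniteSet B) (hAB : A ⊆ B) : LocallyFiniteSet A :=
  fun R => (hB R).subset (inter_subset_inter_left _ hAB)

lemma LocallyFiniteSet.union (hA : LocallyFiniteSet A) (hB : LocallyFiniteSet B) :
    LocallyFiniteSet (A ∪ B) := fun R => by
  rw [union_inter_distrib_right]
  exact (hA R).union (hB R)

lemma LocallyFiniteSet.translate (hA : LocallyFiniteSet A) (u : E) :
    LocallyFiniteSet (translateSet u A) := by
  intro R
  refine ((hA (R + ‖u‖)).image (· - u)).subset ?_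
  rintro _ ⟨⟨x, hx, rfl⟩, hxR⟩
  refine ⟨x, ⟨hx, ?_⟩, rfl⟩
  rw [mem_closedBall_zero_iff] at hxR ⊢
  linarith [norm_le_insert' x u]

lemma UniformlyDiscreteSet.eq_of_dist_lt {r : ℝ} {S : Set E} (hS : UniformlyDiscreteSet r S)
    {x y : E} (hx : x ∈ S) (hy : y ∈ S) (hxy : dist x y < r) : x = y := by
  by_contra hne
  exact (hS x hx y hy hne).not_gt hxy

lemma UniformlyDiscreteSet.locallyFiniteSet {r : ℝ} (hr : 0 < r) {S : Set E}
    (hS : UniformlyDiscreteSet r S) : LocallyFiniteSet S := by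
  intro R
  obtain ⟨t, -, ht, hcover⟩ := finite_approx_of_totallyBounded
    (isCompact_closedBall (0 : E) R).totallyBounded (r / 2) (by positivity)
  have hsub : ∀ y, (S ∩ ball y (r / 2)).Subsingleton := by
    rintro y x ⟨hx, hxy⟩ z ⟨hz, hzy⟩
    refine hS.eq_of_dist_lt hx hz ?_
    rw [mem_ball] at hxy hzy
    linarith [dist_triangle_right x z y]
  refine (ht.biUnion fun y _ => (hsub y).finite).subset ?_
  rintro x ⟨hxS, hxR⟩
  obtain ⟨y, hy, hxy⟩ := mem_iUnion₂.mp (hcover hxR)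
  exact mem_iUnion₂.mpr ⟨y, hy, hxS, hxy⟩

end Finiteness

section Delta

variable {a b : ℝ} {S S' : Set (EuclideanSpace ℝ (Fin n))} {x : EuclideanSpace ℝ (Fin n)}

lemma mem_deltaTilde_iff : x ∈ deltaTilde a S S' ↔ x ∈ S ∧ ∀ y ∈ S', a < dist y x := by
  simp only [deltaTilde, mem_ofPred_eq, singleton_add_closedBall, add_zero,
    eq_empty_iff_forall_notMem, mem_inter_iff, mem_closedBall, not_and]
  refine and_congr_right fun _ => forall_congr' fun y => ?_
  rw [imp_not_comm, not_le]

lemma delta_comm : delta a S S' = delta a S' S := union_comm _ _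

lemma delta_subset_union : delta a S S' ⊆ S ∪ S' :=
  union_subset_union (sep_subset _ _) (sep_subset _ _)

lemma delta_subset_delta (hab : a ≤ b) : delta b S S' ⊆ delta a S S' := by
  have key : ∀ T T' : Set E, deltaTilde b T T' ⊆ deltaTilde a T T' := fun T T' x hx => by
    rw [mem_deltaTilde_iff] at hx ⊢
    exact ⟨hx.1, fun y hy => hab.trans_lt (hx.2 y hy)⟩
  exact union_subset_union (key S S') (key S' S)

lemma notMem_deltaTilde_of_mem (ha : 0 ≤ a) (hx : x ∈ S') : x ∉ deltaTilde a S S' := fun h =>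
  ((mem_deltaTilde_iff.mp h).2 x hx).not_ge (by simpa using ha)

lemma disjoint_deltaTilde (ha : 0 ≤ a) : Disjoint (deltaTilde a S S') (deltaTilde a S' S) :=
  disjoint_left.mpr fun _ hx => notMem_deltaTilde_of_mem ha hx.1

lemma delta_self (ha : 0 ≤ a) : delta a S S = ∅ := by
  rw [delta, union_self]
  exact (disjoint_deltaTilde ha).eq_bot_of_self

lemma deltaTilde_image_isometryEquiv (e : E ≃ᵢ E) :
    deltaTilde a (e '' S) (e '' S') = e '' deltaTilde a S S' := by
  ext x
  simp only [← e.preimage_symm]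
  rw [mem_preimage, mem_deltaTilde_iff, mem_deltaTilde_iff]
  refine and_congr_right fun _ => ?_
  rw [e.symm.surjective.forall (p := fun y => y ∈ S' → a < dist y (e.symm x))]
  simp only [mem_preimage, e.symm.dist_eq]

lemma delta_translateSet (u : E) :
    delta a (translateSet u S) (translateSet u S') = translateSet u (delta a S S') := by
  simp only [delta, translateSet, image_union]
  exact congrArg₂ (· ∪ ·) (deltaTilde_image_isometryEquiv (IsometryEquiv.subRight u))
    (deltaTilde_image_isometryEquiv (IsometryEquiv.subRight u))

end Delta

lemma ENNReal.limsup_add_le' {ι : Type*} {f : Filter ι} (u v : ι → ℝ≥0∞) :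
    limsup (u + v) f ≤ limsup u f + limsup v f := by
  refine le_of_forall_gt_imp_ge_of_dense fun c hc => ?_
  obtain ⟨a, ha, b, hb, hab⟩ := exists_add_lt_of_add_lt hc
  refine limsup_le_of_le (by isBoundedDefault) ?_
  filter_upwards [eventually_lt_of_limsup_lt ha, eventually_lt_of_limsup_lt hb] with x hx hy
  exact ((ENNReal.add_lt_add hx hy).trans hab).le

lemma tendsto_addHaar_closedBall_add_div {F : Type*} [NormedAddCommGroup F] [NormedSpace ℝ F]
    [MeasurableSpace F] [BorelSpace F] [FiniteDimensional ℝ F] (μ : Measure F)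
    [μ.IsAddHaarMeasure] (c : ℝ) :
    Tendsto (fun R : ℝ => μ (closedBall 0 (R + c)) / μ (closedBall 0 R)) atTop (𝓝 1) := by
  have hreal : Tendsto (fun R : ℝ => (1 + c * R⁻¹) ^ Module.finrank ℝ F) atTop (𝓝 1) := by
    simpa using ((tendsto_inv_atTop_zero.const_mul c).const_add 1).pow (Module.finrank ℝ F)
  have hennreal : Tendsto (fun R : ℝ => ENNReal.ofReal ((1 + c * R⁻¹) ^ Module.finrank ℝ F))
      atTop (𝓝 1) := by simpa using ENNReal.tendsto_ofReal hreal
  refine hennreal.congr' ?_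
  filter_upwards [eventually_gt_atTop (max 0 (-c))] with R hR
  have hR0 : 0 < R := (le_max_left _ _).trans_lt hR
  have hRc : 0 ≤ R + c := by linarith [le_max_right 0 (-c)]
  rw [Measure.addHaar_closedBall μ _ hRc, Measure.addHaar_closedBall μ _ hR0.le,
    ENNReal.mul_div_mul_right _ _ (measure_ball_pos μ _ one_pos).ne' measure_ball_lt_top.ne,
    ← ENNReal.ofReal_div_of_pos (pow_pos hR0 _), ← div_pow, add_div, div_self hR0.ne',
    div_eq_mul_inv]

section Density

variable {A B : Set (EuclideanSpace ℝ (Fin n))}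

lemma densSup_le_of_ncard_le (c : ℝ)
    (h : ∀ᶠ R in atTop, (A ∩ closedBall 0 R).ncard ≤ (B ∩ closedBall 0 (R + c)).ncard) :
    densSup A ≤ densSup B := by
  set g : ℝ → ℝ≥0∞ := fun R => (B ∩ closedBall (0 : E) R).ncard / volume (closedBall (0 : E) R)
  set ratio : ℝ → ℝ≥0∞ :=
    fun R => volume (closedBall (0 : E) (R + c)) / volume (closedBall (0 : E) R)
  have hratio : limsup ratio atTop = 1 := (tendsto_addHaar_closedBall_add_div volume c).limsup_eq
  have hshift : limsup (fun R => g (R + c)) atTop = densSup B := by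
    rw [← Function.comp_def, limsup_comp, map_add_atTop_eq]
    rfl
  have hpointwise : ∀ᶠ R in atTop,
      (A ∩ closedBall (0 : E) R).ncard / volume (closedBall (0 : E) R) ≤ g (R + c) * ratio R := by
    filter_upwards [h, eventually_gt_atTop (-c)] with R hR hRc
    have hvol : volume (closedBall (0 : E) (R + c)) ≠ 0 :=
      (measure_closedBall_pos volume _ (by linarith)).ne'
    have hcancel : g (R + c) * ratio R =
        (B ∩ closedBall (0 : E) (R + c)).ncard / volume (closedBall (0 : E) R) := by
      simp only [g, ratio, div_eq_mul_inv, mul_assoc]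
      rw [← mul_assoc (volume _)⁻¹, ENNReal.inv_mul_cancel hvol measure_closedBall_lt_top.ne,
        one_mul]
    rw [hcancel]
    exact ENNReal.div_le_div_right (by exact_mod_cast hR) _
  calc densSup A ≤ limsup (fun R => g (R + c) * ratio R) atTop := limsup_le_limsup hpointwise
    _ ≤ limsup (fun R => g (R + c)) atTop * limsup ratio atTop :=
        ENNReal.limsup_mul_le' (by simp [hratio]) (by simp [hratio])
    _ = densSup B := by rw [hratio, hshift, mul_one]

lemma densSup_le_of_injOn {f : E → E} {c : ℝ} (hB : LocallyFiniteSet B) (hf : MapsTo f A B)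
    (hinj : InjOn f A) (hc : ∀ x ∈ A, dist x (f x) ≤ c) : densSup A ≤ densSup B := by
  refine densSup_le_of_ncard_le c (Eventually.of_forall fun R => ?_)
  refine ncard_le_ncard_of_injOn f (fun x ⟨hxA, hxR⟩ => ⟨hf hxA, ?_⟩)
    (hinj.mono inter_subset_left) (hB _)
  rw [mem_closedBall] at hxR ⊢
  linarith [dist_triangle_left (f x) 0 x, hc x hxA]

lemma densSup_mono (hB : LocallyFiniteSet B) (hAB : A ⊆ B) : densSup A ≤ densSup B :=
  densSup_le_of_injOn (f := id) (c := 0) hB hAB (injOn_id A) (fun x _ => by simp)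

lemma densSup_union_le (A B : Set E) : densSup (A ∪ B) ≤ densSup A + densSup B := by
  refine (limsup_le_limsup (Eventually.of_forall fun R => ?_)).trans
    (ENNReal.limsup_add_le' _ _)
  rw [Pi.add_apply, ← ENNReal.add_div, union_inter_distrib_right]
  exact ENNReal.div_le_div_right (by exact_mod_cast ncard_union_le _ _) _

lemma densSup_empty : densSup (∅ : Set E) = 0 := by
  simp [densSup]

lemma densSup_translateSet (hA : LocallyFiniteSet A) (u : E) :
    densSup (translateSet u A) = densSup A := by
  refine le_antisymm (densSup_le_of_injOn (f := (· + u)) (c := ‖u‖) hA ?_ ?_ ?_)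
    (densSup_le_of_injOn (f := (· - u)) (c := ‖u‖) (hA.translate u) ?_ ?_ ?_)
  · rintro _ ⟨x, hx, rfl⟩
    simpa using hx
  · exact (add_left_injective u).injOn
  · simp
  · exact fun x hx => ⟨x, hx, rfl⟩
  · exact (sub_left_injective).injOn
  · simp

end Density

section Triangle

variable {r a b : ℝ} {S S' S'' : Set (EuclideanSpace ℝ (Fin n))}

lemma exists_mem_delta_union_dist_le (ha : 0 ≤ a) {x : E} (hx : x ∈ deltaTilde (a + b) S S'') :
    ∃ y ∈ delta a S S' ∪ delta b S' S'', dist x y ≤ a := by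
  obtain ⟨hxS, hxfar⟩ := mem_deltaTilde_iff.mp hx
  by_cases hxa : x ∈ deltaTilde a S S'
  · exact ⟨x, Or.inl (Or.inl hxa), by simpa using ha⟩
  obtain ⟨y, hyS', hyx⟩ : ∃ y ∈ S', dist y x ≤ a := by
    simpa [mem_deltaTilde_iff, hxS] using hxa
  refine ⟨y, Or.inr (Or.inl (mem_deltaTilde_iff.mpr ⟨hyS', fun z hz => ?_⟩)), by
    rwa [dist_comm]⟩
  linarith [hxfar z hz, dist_triangle z y x]

/-- Each point is moved by at most `a` (from `S`) or `b` (from `S''`), so two points with the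
same image lie within `2a`, `2b` or `a + b` of each other: `a, b < r / 2` and the definition of
`Δ_{a+b}(S,S'')` rule all three out. -/
lemma exists_injOn_delta_add (hS : UniformlyDiscreteSet r S) (hS'' : UniformlyDiscreteSet r S'')
    (ha : 0 ≤ a) (hb : 0 ≤ b) (har : a < r / 2) (hbr : b < r / 2) :
    ∃ f : E → E, MapsTo f (delta (a + b) S S'') (delta a S S' ∪ delta b S' S'') ∧
      InjOn f (delta (a + b) S S'') ∧ ∀ x ∈ delta (a + b) S S'', dist x (f x) ≤ max a b := by
  have hdisj := disjoint_deltaTilde (a := a + b) (S := S) (S' := S'') (by linarith)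
  have hnear : ∀ x ∈ delta (a + b) S S'', ∃ y ∈ delta a S S' ∪ delta b S' S'',
      (x ∈ deltaTilde (a + b) S S'' → dist x y ≤ a) ∧
        (x ∈ deltaTilde (a + b) S'' S → dist x y ≤ b) := by
    rintro x (hx | hx)
    · obtain ⟨y, hy, hyx⟩ := exists_mem_delta_union_dist_le (S' := S') ha hx
      exact ⟨y, hy, fun _ => hyx, fun hx' => absurd hx' (disjoint_left.mp hdisj hx)⟩
    · obtain ⟨y, hy, hyx⟩ :=
        exists_mem_delta_union_dist_le (S' := S') hb (by rwa [add_comm] at hx)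
      rw [union_comm, delta_comm, @delta_comm _ b] at hy
      exact ⟨y, hy, fun hx' => absurd hx (disjoint_left.mp hdisj hx'), fun _ => hyx⟩
  choose! f hfU hfdist using hnear
  refine ⟨f, hfU, ?_, ?_⟩
  · rw [delta, injOn_union hdisj]
    refine ⟨fun x₁ h₁ x₂ h₂ he => ?_, fun x₁ h₁ x₂ h₂ he => ?_, fun x₁ h₁ x₂ h₂ he => ?_⟩
    · have h₁' := (hfdist x₁ (Or.inl h₁)).1 h₁
      have h₂' := (hfdist x₂ (Or.inl h₂)).1 h₂
      rw [← he] at h₂'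
      exact hS.eq_of_dist_lt h₁.1 h₂.1 (by linarith [dist_triangle_right x₁ x₂ (f x₁)])
    · have h₁' := (hfdist x₁ (Or.inr h₁)).2 h₁
      have h₂' := (hfdist x₂ (Or.inr h₂)).2 h₂
      rw [← he] at h₂'
      exact hS''.eq_of_dist_lt h₁.1 h₂.1 (by linarith [dist_triangle_right x₁ x₂ (f x₁)])
    · have h₁' := (hfdist x₁ (Or.inl h₁)).1 h₁
      have h₂' := (hfdist x₂ (Or.inr h₂)).2 h₂
      rw [← he] at h₂'
      linarith [(mem_deltaTilde_iff.mp h₁).2 x₂ h₂.1, dist_triangle_right x₂ x₁ (f x₁)]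
  · rintro x (hx | hx)
    · exact ((hfdist x (Or.inl hx)).1 hx).trans (le_max_left a b)
    · exact ((hfdist x (Or.inr hx)).2 hx).trans (le_max_right a b)

lemma add_mem_DbarSet (hS : UniformlyDiscreteSet r S) (hS' : UniformlyDiscreteSet r S')
    (hS'' : UniformlyDiscreteSet r S'') (ha : a ∈ DbarSet S S') (hb : b ∈ DbarSet S' S'')
    (har : a < r / 2) (hbr : b < r / 2) : a + b ∈ DbarSet S S'' := by
  obtain ⟨ha0, hda⟩ := ha
  obtain ⟨hb0, hdb⟩ := hb
  have hr : 0 < r := by linarith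
  obtain ⟨f, hf, hinj, hdist⟩ := exists_injOn_delta_add (S' := S') hS hS'' ha0.le hb0.le har hbr
  have hfin : LocallyFiniteSet (delta a S S' ∪ delta b S' S'') :=
    (((hS.locallyFiniteSet hr).union (hS'.locallyFiniteSet hr)).subset delta_subset_union).union
      (((hS'.locallyFiniteSet hr).union (hS''.locallyFiniteSet hr)).subset delta_subset_union)
  refine ⟨add_pos ha0 hb0, ?_⟩
  calc densSup (delta (a + b) S S'')
      ≤ densSup (delta a S S' ∪ delta b S' S'') := densSup_le_of_injOn hfin hf hinj hdist
    _ ≤ densSup (delta a S S') + densSup (delta b S' S'') := densSup_union_le _ _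
    _ ≤ ENNReal.ofReal a + ENNReal.ofReal b := add_le_add hda hdb
    _ = ENNReal.ofReal (a + b) := (ENNReal.ofReal_add ha0.le hb0.le).symm

end Triangle

section DbarSet

variable {a b : ℝ} {S S' : Set (EuclideanSpace ℝ (Fin n))}

lemma DbarSet_subset_Ici : DbarSet S S' ⊆ Ici 0 := fun _ ha => ha.1.le

lemma DbarSet_comm : DbarSet S S' = DbarSet S' S := by
  simp only [DbarSet, delta_comm]

lemma DbarSet_self : DbarSet S S = Ioi 0 := by
  ext a
  refine ⟨fun ha => ha.1, fun ha => ⟨ha, ?_⟩⟩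
  rw [delta_self ha.le, densSup_empty]
  exact zero_le

lemma mem_DbarSet_of_le (hfin : LocallyFiniteSet (S ∪ S')) (ha : a ∈ DbarSet S S')
    (hab : a ≤ b) : b ∈ DbarSet S S' :=
  ⟨ha.1.trans_le hab, calc
    densSup (delta b S S') ≤ densSup (delta a S S') :=
      densSup_mono (hfin.subset delta_subset_union) (delta_subset_delta hab)
    _ ≤ ENNReal.ofReal a := ha.2
    _ ≤ ENNReal.ofReal b := ENNReal.ofReal_le_ofReal hab⟩

lemma DbarSet_translateSet (hfin : LocallyFiniteSet (S ∪ S')) (u : E) :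
    DbarSet (translateSet u S) (translateSet u S') = DbarSet S S' := by
  ext a
  simp only [DbarSet, mem_ofPred_eq, delta_translateSet,
    densSup_translateSet (hfin.subset delta_subset_union)]

end DbarSet

lemma sInf_insert_le_sInf_insert_add {c : ℝ} (hc : 0 ≤ c) {D₁ D₂ D₃ : Set ℝ}
    (h₁ : D₁ ⊆ Ici 0) (h₂ : D₂ ⊆ Ici 0) (h₃ : D₃ ⊆ Ici 0)
    (hadd : ∀ a ∈ D₁, ∀ b ∈ D₂, a < c → b < c → a + b ∈ D₃) :
    sInf (insert c D₃) ≤ sInf (insert c D₁) + sInf (insert c D₂) := by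
  have hbdd : ∀ D : Set ℝ, D ⊆ Ici 0 → BddBelow (insert c D) :=
    fun D hD => ⟨0, fun x hx => insert_subset hc hD hx⟩
  rw [← csInf_add (insert_nonempty _ _) (hbdd _ h₁) (insert_nonempty _ _) (hbdd _ h₂)]
  refine le_csInf ((insert_nonempty _ _).add (insert_nonempty _ _)) ?_
  rintro _ ⟨a, ha, b, hb, rfl⟩
  have ha0 : 0 ≤ a := insert_subset hc h₁ ha
  have hb0 : 0 ≤ b := insert_subset hc h₂ hb
  by_cases hsmall : a < c ∧ b < c
  · refine csInf_le (hbdd _ h₃) (mem_insert_of_mem _ (hadd a ?_ b ?_ hsmall.1 hsmall.2))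
    · exact ha.resolve_left hsmall.1.ne
    · exact hb.resolve_left hsmall.2.ne
  · refine (csInf_le (hbdd _ h₃) (mem_insert _ _)).trans ?_
    rw [not_and_or, not_lt, not_lt] at hsmall
    rcases hsmall with h | h <;> linarith

section Dbar

variable {r : ℝ} {S S' S'' : Set (EuclideanSpace ℝ (Fin n))}

lemma dbar_nonneg (hr : 0 ≤ r) : 0 ≤ dbar r S S' :=
  Real.sInf_nonneg fun _ hx => insert_subset (mem_Ici.mpr (by positivity)) DbarSet_subset_Ici hx

lemma dbar_self (hr : 0 < r) : dbar r S S = 0 := by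
  rw [dbar, DbarSet_self, insert_eq_of_mem (mem_Ioi.mpr (half_pos hr)), csInf_Ioi]

lemma dbar_comm : dbar r S S' = dbar r S' S := by
  rw [dbar, DbarSet_comm, dbar]

lemma dbar_triangle (hr : 0 ≤ r) (hS : UniformlyDiscreteSet r S)
    (hS' : UniformlyDiscreteSet r S') (hS'' : UniformlyDiscreteSet r S'') :
    dbar r S S'' ≤ dbar r S S' + dbar r S' S'' :=
  sInf_insert_le_sInf_insert_add (by positivity) DbarSet_subset_Ici DbarSet_subset_Ici
    DbarSet_subset_Ici fun _ ha _ hb har hbr => add_mem_DbarSet hS hS' hS'' ha hb har hbr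

lemma dbar_translateSet (hfin : LocallyFiniteSet (S ∪ S')) (u : E) :
    dbar r (translateSet u S) (translateSet u S') = dbar r S S' := by
  rw [dbar, DbarSet_translateSet hfin, dbar]

end Dbar

/-- `D̄(S,S')` is a half line unbounded to the right, and `d̄` is a
translation-invariant pseudometric on `U_r`. -/
theorem dbar_pseudometric {r : ℝ} (hr : 0 < r)
    (S S' S'' : Set (EuclideanSpace ℝ (Fin n)))
    (hS : UniformlyDiscreteSet r S) (hS' : UniformlyDiscreteSet r S')
    (hS'' : UniformlyDiscreteSet r S'') :
    (∀ a ∈ DbarSet S S', ∀ b : ℝ, a ≤ b → b ∈ DbarSet S S') ∧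
      0 ≤ dbar r S S' ∧ dbar r S S = 0 ∧ dbar r S S' = dbar r S' S ∧
      dbar r S S'' ≤ dbar r S S' + dbar r S' S'' ∧
      ∀ u : EuclideanSpace ℝ (Fin n),
        dbar r (translateSet u S) (translateSet u S') = dbar r S S' := by
  have hfin : LocallyFiniteSet (S ∪ S') :=
    (hS.locallyFiniteSet hr).union (hS'.locallyFiniteSet hr)
  exact ⟨fun _ ha _ hab => mem_DbarSet_of_le hfin ha hab, dbar_nonneg hr.le, dbar_self hr,
    dbar_comm, dbar_triangle hr.le hS hS' hS'', dbar_translateSet hfin⟩
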